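/- arXiv:2311.02109 — 2 statements merged into one kernel-verified Lean document; each statement's English description precedes it below -/
import Mathlib

section
/- Let G be a connected graph in which every vertex that is not a cutvertex is a leaf (has degree 1), and suppose G contains an induced odd cycle x_1, …, x_r. Then for each i there exists a vertex y_i adjacent to x_i with no path from y_i to x_{i+1} in G − x_i, and the vertices x_1, …, x_r, y_1, …, y_r induce a subgraph isomorphic to the corona product of the odd cycle C_r with a point. -/
open Finset

/-- A move in the graph grabbing game: remove `v` from the remaining set `s`,
keeping the remaining vertices inducing a connected subgraph (or empty). -/
def legalMove {V : Type} [DecidableEq V] (G : SimpleGraph V) (s : Finset V) (v : V) : Prop :=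
  v ∈ s ∧ (s.erase v = ∅ ∨ (G.induce ((s.erase v : Finset V) : Set V)).Connected)

/-- Optimal score of the player to move, computed with fuel `n`. -/
noncomputable def gval {V : Type} [DecidableEq V] (G : SimpleGraph V) (w : V → ℝ) :
    ℕ → Finset V → ℝ
  | 0, _ => 0
  | n + 1, s =>
      sSup {x : ℝ | ∃ v, legalMove G s v ∧
        x = w v + (∑ u ∈ s.erase v, w u) - gval G w n (s.erase v)}

/-- Optimal score of the player to move on remaining vertex set `s`. -/
noncomputable def gameValue {V : Type} [DecidableEq V] (G : SimpleGraph V) (w : V → ℝ)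
    (s : Finset V) : ℝ :=
  gval G w s.card s

/-- Alice (the first player) can guarantee at least half of the total weight. -/
def AliceWins {V : Type} [Fintype V] [DecidableEq V] (G : SimpleGraph V) (w : V → ℝ) : Prop :=
  (∑ v, w v) / 2 ≤ gameValue G w Finset.univ

/-- Bob (the second player) can guarantee strictly more than half of the total weight. -/
def BobWins {V : Type} [Fintype V] [DecidableEq V] (G : SimpleGraph V) (w : V → ℝ) : Prop :=
  gameValue G w Finset.univ < (∑ v, w v) / 2

/-- The cycle graph `C_r` on `ZMod r`. -/
def cycleG (r : ℕ) : SimpleGraph (ZMod r) where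
  Adj a b := a ≠ b ∧ (a = b + 1 ∨ b = a + 1)
  symm := by
    constructor
    intro a b h
    exact ⟨h.1.symm, h.2.symm⟩
  loopless := by
    constructor
    intro a h
    exact h.1 rfl

/-- The corona product of the cycle `C_r` with a point: cycle vertices `(i, false)`
and a pendant leaf `(i, true)` attached to each cycle vertex. -/
def corona (r : ℕ) : SimpleGraph (ZMod r × Bool) where
  Adj a b := a ≠ b ∧
    ((a.2 = false ∧ b.2 = false ∧ (a.1 = b.1 + 1 ∨ b.1 = a.1 + 1)) ∨ (a.2 ≠ b.2 ∧ a.1 = b.1))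
  symm := by
    constructor
    intro a b h
    obtain ⟨h1, h2⟩ := h
    refine ⟨h1.symm, ?_⟩
    rcases h2 with ⟨p, q, s⟩ | ⟨p, q⟩
    · exact Or.inl ⟨q, p, s.symm⟩
    · exact Or.inr ⟨p.symm, q.symm⟩
  loopless := by
    constructor
    intro a h
    exact h.1 rfl

/-- `G` contains an induced subgraph isomorphic to the corona product of an odd cycle
with a point. -/
def HasInducedCorona {V : Type} (G : SimpleGraph V) : Prop :=
  ∃ r : ℕ, Odd r ∧ 3 ≤ r ∧ ∃ f : ZMod r × Bool ↪ V,
    ∀ a b, (corona r).Adj a b ↔ G.Adj (f a) (f b)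


/-!
Removing a cycle vertex `x i` leaves the rest of the cycle connected, while `x i` has two
neighbours on the cycle; by hypothesis `x i` is therefore a cutvertex, so some component of
`G - x i` misses `x (i + 1)`, and a neighbour `y i` of `x i` in that component is the wanted
vertex. Every `x j` with `j ≠ i` lies in the component of `x (i + 1)`, hence is neither equal
nor adjacent to `y i`; and `y i` is not adjacent to `y j` either, since `y j` reaches `x j`
without passing through `x i`. So the `x i` and `y i` span an induced corona.
-/

lemma ZMod.natCast_ne_zero_of_lt {n k : ℕ} (hk0 : k ≠ 0) (hkn : k < n) :
    (k : ZMod n) ≠ 0 := by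
  rw [Ne, ZMod.natCast_eq_zero_iff]
  exact fun h => hk0 (Nat.eq_zero_of_dvd_of_lt h hkn)

namespace SimpleGraph

variable {V : Type} {G : SimpleGraph V}

def ReachableAvoiding (G : SimpleGraph V) (v a b : V) : Prop :=
  ∃ p : G.Walk a b, v ∉ p.support

section ReachableAvoiding

variable {v a b c : V}

lemma ReachableAvoiding.symm (h : G.ReachableAvoiding v a b) : G.ReachableAvoiding v b a := by
  obtain ⟨p, hp⟩ := h
  exact ⟨p.reverse, by rwa [Walk.support_reverse, List.mem_reverse]⟩

lemma ReachableAvoiding.trans (hab : G.ReachableAvoiding v a b)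
    (hbc : G.ReachableAvoiding v b c) : G.ReachableAvoiding v a c := by
  obtain ⟨p, hp⟩ := hab
  obtain ⟨q, hq⟩ := hbc
  exact ⟨p.append q, by simp [Walk.mem_support_append_iff, hp, hq]⟩

lemma ReachableAvoiding.cons (h : G.Adj a b) (ha : a ≠ v) (hb : G.ReachableAvoiding v b c) :
    G.ReachableAvoiding v a c := by
  obtain ⟨p, hp⟩ := hb
  exact ⟨.cons h p, by simp [Walk.support_cons, ha.symm, hp]⟩

lemma reachableAvoiding_refl (ha : a ≠ v) : G.ReachableAvoiding v a a :=
  ⟨.nil, by simpa using ha.symm⟩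

lemma preconnected_induce_compl_singleton (u : V)
    (h : ∀ z, z ≠ v → G.ReachableAvoiding v z u) : (G.induce {v}ᶜ).Preconnected := by
  rintro ⟨a, ha⟩ ⟨b, hb⟩
  obtain ⟨p, hp⟩ := (h a ha).trans (h b hb).symm
  exact ⟨p.induce _ fun w hw => by rintro rfl; exact hp hw⟩

/-- The last vertex before `v` on a walk from `z` to `v` is a neighbour of `v` that `z` reaches
in `G - v`. -/
lemma exists_adj_reachableAvoiding : ∀ {z : V} (_ : G.Walk z v), z ≠ v →
    ∃ c, G.Adj v c ∧ G.ReachableAvoiding v z c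
  | _, .nil, hz => absurd rfl hz
  | z, .cons (v := z') h q, hz => by
    by_cases hz' : z' = v
    · subst hz'
      exact ⟨z, h.symm, reachableAvoiding_refl hz⟩
    · obtain ⟨c, hvc, hz'c⟩ := exists_adj_reachableAvoiding q hz'
      exact ⟨c, hvc, hz'c.cons h hz⟩

lemma exists_adj_not_reachableAvoiding (hG : G.Preconnected)
    (hv : ¬ (G.induce {v}ᶜ).Preconnected) (u : V) :
    ∃ c, G.Adj v c ∧ ¬ G.ReachableAvoiding v c u := by
  by_contra! h
  refine hv (preconnected_induce_compl_singleton u fun z hz => ?_)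
  obtain ⟨c, hvc, hzc⟩ := exists_adj_reachableAvoiding (hG z v).some hz
  exact hzc.trans (h c hvc)

end ReachableAvoiding

section Cycle

variable {r : ℕ} {x : ZMod r → V}

lemma reachableAvoiding_along_cycle (hinj : Function.Injective x)
    (hstep : ∀ j, G.Adj (x j) (x (j + 1))) (i : ZMod r) {k : ℕ} (hk : 1 ≤ k) (hkr : k < r) :
    G.ReachableAvoiding (x i) (x (i + 1)) (x (i + k)) := by
  have hne : ∀ m : ℕ, m ≠ 0 → m < r → x (i + m) ≠ x i := fun m hm0 hmr h =>
    ZMod.natCast_ne_zero_of_lt hm0 hmr (by simpa using hinj h)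
  induction k, hk using Nat.le_induction with
  | base => simpa using reachableAvoiding_refl (hne 1 one_ne_zero hkr)
  | succ k hk ih =>
    have hstep' : G.Adj (x (i + k)) (x (i + (k + 1 : ℕ))) := by
      simpa [add_assoc] using hstep (i + k)
    exact (ih (by omega)).trans <|
      (reachableAvoiding_refl (hne _ k.succ_ne_zero hkr)).cons hstep' (hne k (by omega) (by omega))

lemma reachableAvoiding_of_mem_cycle [NeZero r] (hinj : Function.Injective x)
    (hstep : ∀ j, G.Adj (x j) (x (j + 1))) {i j : ZMod r} (hji : j ≠ i) :
    G.ReachableAvoiding (x i) (x j) (x (i + 1)) := by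
  have hval : i + ((j - i).val : ZMod r) = j := by
    rw [ZMod.natCast_zmod_val]; ring
  have h := reachableAvoiding_along_cycle hinj hstep i
    (Nat.one_le_iff_ne_zero.2 ((ZMod.val_ne_zero _).2 (sub_ne_zero.2 hji))) (ZMod.val_lt _)
  rw [hval] at h
  exact h.symm

end Cycle

lemma degree_ne_one_of_adj_of_adj {v a b : V} [Fintype (G.neighborSet v)] (hab : a ≠ b)
    (ha : G.Adj v a) (hb : G.Adj v b) : G.degree v ≠ 1 := by
  rw [Ne, degree_eq_one_iff_existsUnique_adj]
  rintro ⟨w, -, hw⟩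
  exact hab ((hw a ha).trans (hw b hb).symm)

section Pendant

variable {r : ℕ} {x y : ZMod r → V}

lemma pendant_ne_cycle
    (hreach : ∀ i j, j ≠ i → G.ReachableAvoiding (x i) (x j) (x (i + 1)))
    (hy : ∀ i, G.Adj (x i) (y i) ∧ ¬ G.ReachableAvoiding (x i) (y i) (x (i + 1)))
    (i j : ZMod r) : y i ≠ x j := by
  intro h
  rcases eq_or_ne j i with rfl | hji
  · exact (hy j).1.ne h.symm
  · exact (hy i).2 (h ▸ hreach i j hji)

lemma adj_pendant_iff
    (hreach : ∀ i j, j ≠ i → G.ReachableAvoiding (x i) (x j) (x (i + 1)))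
    (hy : ∀ i, G.Adj (x i) (y i) ∧ ¬ G.ReachableAvoiding (x i) (y i) (x (i + 1)))
    (i j : ZMod r) : G.Adj (x i) (y j) ↔ i = j := by
  refine ⟨fun h => by_contra fun hij => (hy j).2 ?_, by rintro rfl; exact (hy i).1⟩
  exact (hreach j i hij).cons h.symm (hy j).1.ne'

lemma not_adj_pendant_pendant
    (hreach : ∀ i j, j ≠ i → G.ReachableAvoiding (x i) (x j) (x (i + 1)))
    (hy : ∀ i, G.Adj (x i) (y i) ∧ ¬ G.ReachableAvoiding (x i) (y i) (x (i + 1)))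
    (i j : ZMod r) : ¬ G.Adj (y i) (y j) := by
  intro h
  rcases eq_or_ne i j with rfl | hij
  · exact G.irrefl h
  · refine (hy i).2 (((hreach i j hij.symm).cons (hy j).1.symm ?_).cons h (hy i).1.ne')
    exact pendant_ne_cycle hreach hy j i

end Pendant

lemma exists_corona_embedding {r : ℕ} (x : ZMod r ↪ V) (y : ZMod r → V)
    (hx : ∀ a b, (cycleG r).Adj a b ↔ G.Adj (x a) (x b))
    (hxy : ∀ i j, G.Adj (x i) (y j) ↔ i = j) (hyy : ∀ i j, ¬ G.Adj (y i) (y j)) :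
    ∃ f : ZMod r × Bool ↪ V, (∀ i, f (i, false) = x i ∧ f (i, true) = y i) ∧
      ∀ a b, (corona r).Adj a b ↔ G.Adj (f a) (f b) := by
  have hyx : ∀ i j, y i ≠ x j := fun i j h => hyy j i (h ▸ ((hxy j j).2 rfl).symm)
  have hy : Function.Injective y := fun i j h => ((hxy i j).1 (h ▸ (hxy i i).2 rfl))
  let f : ZMod r × Bool → V := fun a => cond a.2 (y a.1) (x a.1)
  have hf : Function.Injective f := by
    rintro ⟨i, _ | _⟩ ⟨j, _ | _⟩ h <;> simp only [f, cond_false, cond_true] at h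
    · rw [x.injective h]
    · exact (hyx j i h.symm).elim
    · exact (hyx i j h).elim
    · rw [hy h]
  refine ⟨⟨f, hf⟩, fun i => ⟨rfl, rfl⟩, ?_⟩
  rintro ⟨i, _ | _⟩ ⟨j, _ | _⟩
  · show _ ↔ G.Adj (x i) (x j)
    simp [corona, ← hx, cycleG]
  · show _ ↔ G.Adj (x i) (y j)
    simp [corona, hxy]
  · show _ ↔ G.Adj (y i) (x j)
    rw [G.adj_comm, hxy]
    simp [corona]
    exact eq_comm
  · show _ ↔ G.Adj (y i) (y j)
    simp [corona, hyy]

end SimpleGraph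

open SimpleGraph in
theorem stmt2_general {V : Type} [Fintype V] (G : SimpleGraph V) [DecidableRel G.Adj]
    (hconn : G.Connected)
    (hleaf : ∀ v : V, (G.induce ({v}ᶜ : Set V)).Connected → G.degree v = 1)
    (r : ℕ) (hr : 3 ≤ r) (x : ZMod r ↪ V)
    (hx : ∀ a b, (cycleG r).Adj a b ↔ G.Adj (x a) (x b)) :
    ∃ y : ZMod r → V,
      (∀ i, G.Adj (x i) (y i) ∧ ¬ ∃ p : G.Walk (y i) (x (i + 1)), x i ∉ p.support) ∧
      ∃ f : ZMod r × Bool ↪ V, (∀ i, f (i, false) = x i ∧ f (i, true) = y i) ∧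
        ∀ a b, (corona r).Adj a b ↔ G.Adj (f a) (f b) := by
  have : NeZero r := ⟨by omega⟩
  have h1 : (1 : ZMod r) ≠ 0 := by
    exact_mod_cast ZMod.natCast_ne_zero_of_lt one_ne_zero (by omega)
  have h2 : (2 : ZMod r) ≠ 0 := by
    exact_mod_cast ZMod.natCast_ne_zero_of_lt two_ne_zero (by omega)
  have hstep : ∀ j, G.Adj (x j) (x (j + 1)) := fun j =>
    (hx _ _).1 ⟨fun h => h1 (by linear_combination -h), Or.inr rfl⟩
  have hreach : ∀ i j, j ≠ i → G.ReachableAvoiding (x i) (x j) (x (i + 1)) :=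
    fun _ _ => reachableAvoiding_of_mem_cycle x.injective hstep
  have hcut : ∀ i, ¬ (G.induce {x i}ᶜ).Preconnected := fun i hpre => by
    have hsucc : x (i + 1) ≠ x i := (hstep i).ne'
    have hpred : G.Adj (x i) (x (i - 1)) := by simpa using (hstep (i - 1)).symm
    exact degree_ne_one_of_adj_of_adj (fun h => h2 (by linear_combination x.injective h))
      (hstep i) hpred (hleaf _ ((connected_iff _).2 ⟨hpre, ⟨⟨x (i + 1), hsucc⟩⟩⟩))
  choose y hy using fun i =>
    exists_adj_not_reachableAvoiding hconn.preconnected (hcut i) (x (i + 1))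
  obtain ⟨f, hfxy, hf⟩ := exists_corona_embedding x y hx (adj_pendant_iff hreach hy)
    (not_adj_pendant_pendant hreach hy)
  exact ⟨y, hy, f, hfxy, hf⟩

theorem stmt2 {V : Type} [Fintype V] [DecidableEq V] (G : SimpleGraph V) [DecidableRel G.Adj]
    (hconn : G.Connected)
    (hleaf : ∀ v : V, (G.induce ({v}ᶜ : Set V)).Connected → G.degree v = 1)
    (r : ℕ) (hodd : Odd r) (hr : 3 ≤ r) (x : ZMod r ↪ V)
    (hx : ∀ a b, (cycleG r).Adj a b ↔ G.Adj (x a) (x b)) :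
    ∃ y : ZMod r → V,
      (∀ i, G.Adj (x i) (y i) ∧ ¬ ∃ p : G.Walk (y i) (x (i + 1)), x i ∉ p.support) ∧
      ∃ f : ZMod r × Bool ↪ V, (∀ i, f (i, false) = x i ∧ f (i, true) = y i) ∧
        ∀ a b, (corona r).Adj a b ↔ G.Adj (f a) (f b) :=
  stmt2_general G hconn hleaf r hr x hx
end

section
/- Let G be a connected even-order graph with weights in {0,1} on which Bob has a winning strategy, and suppose G is minimal with this property under vertex deletion (no connected even-order induced subgraph obtained by deleting vertices admits a {0,1}-weighting on which Bob wins). Then every vertex of G that is not a cutvertex is a leaf of weight 0. -/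
open Finset

/-!
By minimality, Alice wins every game played on a proper even connected part of `G`. Hence after
any first move `y` of Alice, Bob's best reply `u` gains at most `w u ≤ 1` beyond half of what is
left, so a first move of weight `1` would already give Alice half the total: every non-cutvertex
has weight `0`. If `v` is a non-cutvertex, Bob's optimal reply `u` to Alice taking `v` must then
have weight `1`. A neighbour `x ≠ u` of `v` would lie in the connected remainder `G - v - u`, so
that `G - u` is connected through the edge `vx` and `u` would be a first move of weight `1`.
-/

open SimpleGraph

namespace GraphGrabbing

variable {V : Type}

lemma connected_induce_comap_iff {W : Type} (G : SimpleGraph V) (f : W ↪ V) (t : Set W) :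
    ((G.comap f).induce t).Connected ↔ (G.induce (f '' t)).Connected :=
  Iso.connected_iff { toEquiv := Equiv.Set.image f t f.injective, map_rel_iff' := Iff.rfl }

variable [DecidableEq V]

section InducedSubgraph

variable {W : Type} [DecidableEq W]

lemma legalMove_comap_iff (G : SimpleGraph V) (f : W ↪ V) (t : Finset W) (v : W) :
    legalMove (G.comap f) t v ↔ legalMove G (t.map f) (f v) := by
  rw [legalMove, legalMove, ← map_erase, mem_map', map_eq_empty, coe_map,
    connected_induce_comap_iff]

lemma gval_comap (G : SimpleGraph V) (w : V → ℝ) (f : W ↪ V) (n : ℕ) (t : Finset W) :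
    gval (G.comap f) (w ∘ f) n t = gval G w n (t.map f) := by
  induction n generalizing t with
  | zero => rfl
  | succ n ih =>
    simp only [gval]
    congr 1
    ext x
    constructor
    · rintro ⟨v, hv, rfl⟩
      refine ⟨f v, (legalMove_comap_iff G f t v).1 hv, ?_⟩
      simp [← map_erase, sum_map, ih]
    · rintro ⟨_, hv, rfl⟩
      obtain ⟨v, -, rfl⟩ := mem_map.1 hv.1
      refine ⟨v, (legalMove_comap_iff G f t v).2 hv, ?_⟩
      simp [← map_erase, sum_map, ih]

end InducedSubgraph

lemma aliceWins_induce_iff (G : SimpleGraph V) (w : V → ℝ) (s : Finset V) :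
    AliceWins (G.induce (s : Set V)) (fun x => w x) ↔ (∑ u ∈ s, w u) / 2 ≤ gameValue G w s := by
  have hmap : (univ : Finset (s : Set V)).map (Function.Embedding.subtype _) = s := by
    ext; simp
  have hvalue : gameValue (G.induce (s : Set V)) (fun x => w x) (univ : Finset (s : Set V)) =
      gameValue G w s := by
    have h := gval_comap G w (Function.Embedding.subtype (· ∈ (s : Set V)))
      #(univ : Finset (s : Set V)) univ
    have hcard : #(univ : Finset (s : Set V)) = #s := by simp
    rw [hmap, hcard] at h
    rw [gameValue, gameValue, hcard]
    exact h
  rw [AliceWins, hvalue, sum_finset_coe w s]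

section Recursion

variable (G : SimpleGraph V) (w : V → ℝ)

noncomputable def moveValue (s : Finset V) (v : V) : ℝ :=
  w v + ∑ u ∈ s.erase v, w u - gameValue G w (s.erase v)

lemma gameValue_empty : gameValue G w ∅ = 0 := rfl

lemma finite_moveValue_image (s : Finset V) :
    (moveValue G w s '' {v | legalMove G s v}).Finite :=
  (s.finite_toSet.subset fun _ hv => hv.1).image _

lemma gameValue_eq_sSup {s : Finset V} (hs : s.Nonempty) :
    gameValue G w s = sSup (moveValue G w s '' {v | legalMove G s v}) := by
  obtain ⟨n, hn⟩ := Nat.exists_eq_add_one_of_ne_zero hs.card_pos.ne'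
  rw [gameValue, hn, gval]
  congr 1
  ext x
  refine exists_congr fun v => ?_
  rw [Set.mem_ofPred_eq, and_congr_right_iff, eq_comm]
  intro hv
  rw [moveValue, gameValue, card_erase_of_mem hv.1, hn, Nat.add_sub_cancel]

lemma moveValue_le_gameValue {s : Finset V} {v : V} (hv : legalMove G s v) :
    moveValue G w s v ≤ gameValue G w s := by
  rw [gameValue_eq_sSup G w ⟨v, hv.1⟩]
  exact le_csSup (finite_moveValue_image G w s).bddAbove ⟨v, hv, rfl⟩

lemma gameValue_le {s : Finset V} {c : ℝ} (hc : 0 ≤ c)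
    (h : ∀ v, legalMove G s v → moveValue G w s v ≤ c) : gameValue G w s ≤ c := by
  rcases s.eq_empty_or_nonempty with rfl | hs
  · exact hc
  rw [gameValue_eq_sSup G w hs]
  exact Real.sSup_le (by rintro _ ⟨v, hv, rfl⟩; exact h v hv) hc

lemma exists_legalMove_gameValue_eq {s : Finset V} (h : 0 < gameValue G w s) :
    ∃ v, legalMove G s v ∧ gameValue G w s = moveValue G w s v := by
  rcases s.eq_empty_or_nonempty with rfl | hs
  · exact absurd h (lt_irrefl _)
  rw [gameValue_eq_sSup G w hs] at h ⊢
  have hne : (moveValue G w s '' {v | legalMove G s v}).Nonempty := by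
    by_contra hempty
    rw [Set.not_nonempty_iff_eq_empty.1 hempty, Real.sSup_empty] at h
    exact lt_irrefl _ h
  obtain ⟨v, hv, hx⟩ := hne.csSup_mem (finite_moveValue_image G w s)
  exact ⟨v, hv, hx.symm⟩

end Recursion

section MinimalBobWin

variable [Fintype V] {G : SimpleGraph V} {w : V → ℝ}

def AliceWinsProperEvenPositions (G : SimpleGraph V) (w : V → ℝ) : Prop :=
  ∀ s : Finset V, s ⊂ univ → Even #s → (s = ∅ ∨ (G.induce (s : Set V)).Connected) →
    (∑ u ∈ s, w u) / 2 ≤ gameValue G w s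

lemma even_card_univ_erase_erase (heven : Even (Fintype.card V)) {y u : V}
    (hu : u ∈ univ.erase y) : Even #((univ.erase y).erase u) := by
  have htwo : 1 < Fintype.card V := Fintype.one_lt_card_iff.2 ⟨u, y, ne_of_mem_erase hu⟩
  rw [card_erase_of_mem hu, card_erase_of_mem (mem_univ y), card_univ]
  obtain ⟨k, hk⟩ := heven
  exact ⟨k - 1, by omega⟩

lemma univ_erase_erase_ssubset (y u : V) : (univ.erase y).erase u ⊂ univ :=
  (erase_subset u _).trans_ssubset (erase_ssubset (mem_univ y))

lemma gameValue_univ_erase_le (hw0 : ∀ v, 0 ≤ w v) (hw1 : ∀ v, w v ≤ 1)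
    (heven : Even (Fintype.card V)) (hAlice : AliceWinsProperEvenPositions G w) (y : V) :
    gameValue G w (univ.erase y) ≤ (∑ u ∈ univ.erase y, w u + 1) / 2 := by
  refine gameValue_le G w (by linarith [sum_nonneg fun u (_ : u ∈ univ.erase y) => hw0 u])
    fun u hu => ?_
  have hrest := hAlice _ (univ_erase_erase_ssubset y u) (even_card_univ_erase_erase heven hu.1) hu.2
  have hsum := sum_erase_add _ w hu.1
  rw [moveValue]
  linarith [hw1 u]

lemma weight_eq_zero_of_legalMove_univ (hw : ∀ v, w v = 0 ∨ w v = 1)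
    (heven : Even (Fintype.card V)) (hAlice : AliceWinsProperEvenPositions G w)
    (hBob : BobWins G w) {y : V} (hy : legalMove G univ y) : w y = 0 := by
  refine (hw y).resolve_right fun hy1 => ?_
  have hbound := gameValue_univ_erase_le (fun v => by rcases hw v with h | h <;> simp [h])
    (fun v => by rcases hw v with h | h <;> simp [h]) heven hAlice y
  have hmove := moveValue_le_gameValue G w hy
  have hsum := add_sum_erase univ w (mem_univ y)
  rw [moveValue] at hmove
  rw [BobWins] at hBob
  linarith

lemma exists_forall_adj_eq_of_bobWins (hw : ∀ v, w v = 0 ∨ w v = 1)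
    (heven : Even (Fintype.card V)) (hAlice : AliceWinsProperEvenPositions G w)
    (hBob : BobWins G w) {v : V} (hv : legalMove G univ v) (hv0 : w v = 0) :
    ∃ u, ∀ x, G.Adj v x → x = u := by
  have hmove := moveValue_le_gameValue G w hv
  have hsum := add_sum_erase univ w (mem_univ v)
  have hnonneg : 0 ≤ ∑ u ∈ univ.erase v, w u :=
    sum_nonneg fun u _ => by rcases hw u with h | h <;> simp [h]
  rw [moveValue] at hmove
  rw [BobWins] at hBob
  obtain ⟨u, hu, hreply⟩ := exists_legalMove_gameValue_eq G w (s := univ.erase v) (by linarith)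
  have hrest := hAlice _ (univ_erase_erase_ssubset v u) (even_card_univ_erase_erase heven hu.1) hu.2
  have hsum' := sum_erase_add _ w hu.1
  rw [moveValue] at hreply
  have hu1 : w u = 1 := (hw u).resolve_left fun h => by linarith
  refine ⟨u, fun x hvx => by_contra fun hxu => ?_⟩
  have hx : x ∈ (univ.erase v).erase u := by simp [hxu, hvx.ne']
  have hconn : (G.induce (((univ.erase v).erase u : Finset V) : Set V)).Connected :=
    hu.2.resolve_left (ne_empty_of_mem hx)
  have hset : ((univ.erase u : Finset V) : Set V) =
      ({v} : Set V) ∪ (((univ.erase v).erase u : Finset V) : Set V) := by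
    ext z
    by_cases hzv : z = v <;> simp [hzv, (ne_of_mem_erase hu.1).symm]
  have hu_legal : legalMove G univ u := ⟨mem_univ u, Or.inr <| hset ▸ connected_induce_union
    Preconnected.of_subsingleton hconn.preconnected (Set.mem_singleton v) hx hvx⟩
  simp [weight_eq_zero_of_legalMove_univ hw heven hAlice hBob hu_legal] at hu1

end MinimalBobWin

end GraphGrabbing

open GraphGrabbing

theorem stmt4 {V : Type} [Fintype V] [DecidableEq V] (G : SimpleGraph V) [DecidableRel G.Adj]
    (w : V → ℝ) (hw : ∀ v, w v = 0 ∨ w v = 1)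
    (hconn : G.Connected) (heven : Even (Fintype.card V))
    (hBob : BobWins G w)
    (hmin : ∀ s : Finset V, s ⊂ Finset.univ → Even s.card →
      (G.induce ((s : Finset V) : Set V)).Connected →
      ∀ w' : ((s : Finset V) : Set V) → ℝ, (∀ x, w' x = 0 ∨ w' x = 1) →
        ¬ BobWins (G.induce ((s : Finset V) : Set V)) w') :
    ∀ v : V, (G.induce ({v}ᶜ : Set V)).Connected → G.degree v = 1 ∧ w v = 0 := by
  have hAlice : AliceWinsProperEvenPositions G w := by
    rintro s hs hcard (rfl | hsconn)
    · simp [gameValue_empty]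
    · exact (aliceWins_induce_iff G w s).1 (not_lt.1 (hmin s hs hcard hsconn _ fun x => hw x))
  intro v hv
  have hlegal : legalMove G univ v :=
    ⟨mem_univ v, Or.inr (by rwa [coe_erase, coe_univ, ← Set.compl_eq_univ_sdiff])⟩
  have hv0 := weight_eq_zero_of_legalMove_univ hw heven hAlice hBob hlegal
  obtain ⟨u, hu⟩ := exists_forall_adj_eq_of_bobWins hw heven hAlice hBob hlegal hv0
  have : Nontrivial V := by
    obtain ⟨k, hk⟩ := heven
    have hpos := Fintype.card_pos_iff.2 ⟨v⟩
    exact Fintype.one_lt_card_iff_nontrivial.1 (by omega)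
  have hdeg : G.degree v ≤ 1 := by
    rw [← card_neighborFinset_eq_degree, ← card_singleton u]
    exact card_le_card fun x hx => mem_singleton.2 (hu x ((mem_neighborFinset G v x).1 hx))
  exact ⟨le_antisymm hdeg (hconn.preconnected.degree_pos_of_nontrivial v), hv0⟩
end
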